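/- arXiv:1807.10631 — 3 statements merged into one kernel-verified Lean document; each statement's English description precedes it below -/
import Mathlib

section
/- For real parameters 0 < α < β, the integral ∫_{-α}^{β} (2ζ + α - β) / sqrt((ζ²+4)(α+ζ)(β-ζ)) dζ is strictly negative. -/
/-!
The substitution `ζ = L t + c` with `L = (α + β) / 2`, `c = (β - α) / 2` maps `[-1, 1]` onto
`[-α, β]` and turns the integral into `L ∫_{-1}^{1} 2t / √((Lt + c)² + 4) · (1 - t²)^{-1/2} dt`,
whose weight is the (integrable) Chebyshev weight. Pairing `t` with `-t`: since `c > 0`, the point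
`Lt + c` lies farther from `0` than `-Lt + c`, so the positive contribution at `t` is outweighed
by the negative one at `-t`.
-/

open Real MeasureTheory intervalIntegral Set

theorem intervalIntegral_lt_zero_of_add_comp_neg_lt_zero {f : ℝ → ℝ} {a : ℝ} (ha : 0 < a)
    (hf : IntervalIntegrable f volume (-a) a) (hneg : ∀ t ∈ Ioo 0 a, f t + f (-t) < 0) :
    ∫ t in -a..a, f t < 0 := by
  have hleft : IntervalIntegrable f volume (-a) 0 :=
    hf.mono_set (uIcc_subset_uIcc_left (by simp [uIcc_of_le, ha.le]))
  have hright : IntervalIntegrable f volume 0 a :=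
    hf.mono_set (uIcc_subset_uIcc_right (by simp [uIcc_of_le, ha.le]))
  have hreflect : IntervalIntegrable (fun t => f (-t)) volume 0 a := by
    simpa using (IntervalIntegrable.iff_comp_neg (by simp)).mp hleft.symm
  have hsplit : ∫ t in -a..a, f t = ∫ t in 0..a, (f t + f (-t)) := by
    rw [integral_add hright hreflect, integral_comp_neg, neg_zero,
      ← integral_add_adjacent_intervals hleft hright, add_comm]
  have hpos : 0 < ∫ t in 0..a, -(f t + f (-t)) :=
    intervalIntegral_pos_of_pos_on (hright.add hreflect).neg
      (fun t ht => neg_pos.mpr (hneg t ht)) ha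
  rw [intervalIntegral.integral_neg] at hpos
  linarith

theorem div_sqrt_sq_add_four_add_comp_neg_lt_zero {L c t : ℝ} (hL : 0 < L) (hc : 0 < c)
    (ht : 0 < t) : 2 * t / √((L * t + c) ^ 2 + 4) + 2 * -t / √((L * -t + c) ^ 2 + 4) < 0 := by
  have hfar : √((L * -t + c) ^ 2 + 4) < √((L * t + c) ^ 2 + 4) :=
    Real.sqrt_lt_sqrt (by positivity) (by nlinarith [mul_pos (mul_pos hL ht) hc])
  have := div_lt_div_of_pos_left (by linarith : 0 < 2 * t) (by positivity) hfar
  rw [mul_neg, neg_div]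
  linarith

theorem integrand_comp_mul_add {α β L c : ℝ} (hα : α = L - c) (hβ : β = L + c) (hL : 0 < L)
    (t : ℝ) :
    (2 * (L * t + c) + α - β) / √(((L * t + c) ^ 2 + 4) * (α + (L * t + c)) * (β - (L * t + c)))
      = 2 * t / √((L * t + c) ^ 2 + 4) * √(1 - t ^ 2)⁻¹ := by
  subst hα hβ
  set ζ := L * t + c
  have hden : (ζ ^ 2 + 4) * (L - c + ζ) * (L + c - ζ) = (ζ ^ 2 + 4) * L ^ 2 * (1 - t ^ 2) := by
    simp only [ζ]; ring
  have hnum : 2 * ζ + (L - c) - (L + c) = L * (2 * t) := by simp only [ζ]; ring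
  rw [Real.sqrt_inv, hnum, hden, Real.sqrt_mul (by positivity), Real.sqrt_mul (by positivity),
    Real.sqrt_sq hL.le]
  field_simp

theorem stmt_0 (α β : ℝ) (hα : 0 < α) (hαβ : α < β) :
    (∫ ζ in (-α)..β, (2*ζ + α - β) / Real.sqrt ((ζ^2 + 4) * (α + ζ) * (β - ζ))) < 0 := by
  set F := fun ζ => (2*ζ + α - β) / √((ζ^2 + 4) * (α + ζ) * (β - ζ))
  set L := (α + β) / 2
  set c := (β - α) / 2
  have hL : 0 < L := by simp only [L]; linarith
  have hc : 0 < c := by simp only [c]; linarith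
  set g : ℝ → ℝ := fun t => 2 * t / √((L * t + c) ^ 2 + 4)
  have hrescale : ∫ ζ in (-α)..β, F ζ = L * ∫ t in -1..1, g t * √(1 - t ^ 2)⁻¹ := by
    have hcomp : ∫ t in -1..1, g t * √(1 - t ^ 2)⁻¹ = ∫ t in -1..1, F (L * t + c) :=
      integral_congr fun t _ => (integrand_comp_mul_add (by ring) (by ring) hL t).symm
    rw [hcomp, integral_comp_mul_add F hL.ne', show L * -1 + c = -α by ring,
      show L * 1 + c = β by ring, smul_eq_mul, mul_inv_cancel_left₀ hL.ne']
  have hg : Continuous g :=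
    (continuous_const.mul continuous_id).div (by fun_prop) fun t => by positivity
  rw [hrescale]
  refine mul_neg_of_pos_of_neg hL (intervalIntegral_lt_zero_of_add_comp_neg_lt_zero one_pos
    (Polynomial.Chebyshev.intervalIntegrable_sqrt_one_sub_sq_inv.continuousOn_mul
      hg.continuousOn) fun t ht => ?_)
  have hw : 0 < √(1 - t ^ 2)⁻¹ := Real.sqrt_pos.mpr (inv_pos.mpr (by nlinarith [ht.1, ht.2]))
  rw [neg_sq, ← add_mul]
  exact mul_neg_of_neg_of_pos (div_sqrt_sq_add_four_add_comp_neg_lt_zero hL hc ht.1) hw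
end

section
/- The function m ↦ 2E(m) - K(m) is strictly decreasing on (0,1), tends to π/2 as m → 0+, and tends to -∞ as m → 1-. -/
open Real Filter Topology

/-- Complete elliptic integral of the first kind (parameter convention). -/
noncomputable def ellK (m : ℝ) : ℝ := ∫ θ in (0:ℝ)..(π/2), 1 / Real.sqrt (1 - m * Real.sin θ ^ 2)

/-- Complete elliptic integral of the second kind (parameter convention). -/
noncomputable def ellE (m : ℝ) : ℝ := ∫ θ in (0:ℝ)..(π/2), Real.sqrt (1 - m * Real.sin θ ^ 2)

/-- Complete elliptic integral of the third kind (parameter convention). -/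
noncomputable def ellPi (n m : ℝ) : ℝ :=
  ∫ θ in (0:ℝ)..(π/2), 1 / ((1 - n * Real.sin θ ^ 2) * Real.sqrt (1 - m * Real.sin θ ^ 2))

noncomputable def elF (m θ : ℝ) : ℝ :=
  2 * Real.sqrt (1 - m * Real.sin θ ^ 2) - 1 / Real.sqrt (1 - m * Real.sin θ ^ 2)

lemma arg_pos {m : ℝ} (hm : m < 1) (θ : ℝ) : 0 < 1 - m * Real.sin θ ^ 2 := by
  have h1 : Real.sin θ ^ 2 ≤ 1 := Real.sin_sq_le_one θ
  have h2 : (0:ℝ) ≤ Real.sin θ ^ 2 := sq_nonneg _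
  rcases le_or_gt m 0 with h | h
  · nlinarith
  · nlinarith

lemma cont_sqrt {m : ℝ} : Continuous fun θ : ℝ => Real.sqrt (1 - m * Real.sin θ ^ 2) := by
  fun_prop

lemma cont_inv_sqrt {m : ℝ} (hm : m < 1) :
    Continuous fun θ : ℝ => 1 / Real.sqrt (1 - m * Real.sin θ ^ 2) := by
  apply Continuous.div continuous_const cont_sqrt
  intro θ
  exact (Real.sqrt_pos.mpr (arg_pos hm θ)).ne'

lemma cont_elF {m : ℝ} (hm : m < 1) : Continuous (elF m) :=
  (continuous_const.mul cont_sqrt).sub (cont_inv_sqrt hm)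

lemma repr_elF {m : ℝ} (hm : m < 1) :
    2 * ellE m - ellK m = ∫ θ in (0:ℝ)..(π/2), elF m θ := by
  unfold ellE ellK elF
  rw [← intervalIntegral.integral_const_mul,
    ← intervalIntegral.integral_sub]
  · exact (continuous_const.mul cont_sqrt).intervalIntegrable _ _
  · exact (cont_inv_sqrt hm).intervalIntegrable _ _

/-- strict monotone decrease of `x ↦ 2√(1-x) - 1/√(1-x)`. -/
lemma phi_strict {x y : ℝ} (_hx : 0 ≤ x) (hxy : x < y) (hy : y < 1) :
    2 * Real.sqrt (1 - y) - 1 / Real.sqrt (1 - y) <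
      2 * Real.sqrt (1 - x) - 1 / Real.sqrt (1 - x) := by
  have h1 : Real.sqrt (1 - y) < Real.sqrt (1 - x) := by
    apply Real.sqrt_lt_sqrt (by linarith) (by linarith)
  have h2 : 0 < Real.sqrt (1 - y) := Real.sqrt_pos.mpr (by linarith)
  have h3 : 1 / Real.sqrt (1 - x) < 1 / Real.sqrt (1 - y) :=
    one_div_lt_one_div_of_lt h2 h1
  linarith

theorem stmt_8 :
    StrictAntiOn (fun m => 2 * ellE m - ellK m) (Set.Ioo (0:ℝ) 1) ∧
    Tendsto (fun m => 2 * ellE m - ellK m) (nhdsWithin 0 (Set.Ioi 0)) (nhds (π/2)) ∧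
    Tendsto (fun m => 2 * ellE m - ellK m) (nhdsWithin 1 (Set.Iio 1)) atBot := by
  have hpi : (0:ℝ) < π / 2 := by positivity
  refine ⟨?_, ?_, ?_⟩
  · -- strict antitonicity
    intro a ha b hb hab
    simp only
    rw [repr_elF ha.2, repr_elF hb.2]
    have key : ∀ θ : ℝ, 0 < Real.sin θ → elF b θ < elF a θ := by
      intro θ hs
      have hs2 : 0 < Real.sin θ ^ 2 := by positivity
      have h1 : 0 < 1 - b * Real.sin θ ^ 2 := arg_pos hb.2 θ
      exact phi_strict (mul_nonneg ha.1.le (sq_nonneg _)) (by nlinarith [ha.1, hab]) (by linarith)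
    apply intervalIntegral.integral_lt_integral_of_continuousOn_of_le_of_exists_lt hpi
      (cont_elF hb.2).continuousOn (cont_elF ha.2).continuousOn
    · intro θ hθ
      exact (key θ (Real.sin_pos_of_pos_of_lt_pi hθ.1 (by linarith [Real.pi_pos, hθ.2]))).le
    · exact ⟨π / 2, ⟨hpi.le, le_refl _⟩,
        key _ (by rw [Real.sin_pi_div_two]; norm_num)⟩
  · -- limit at 0⁺
    have hmem : Set.Ioo (0:ℝ) 1 ∈ 𝓝[>] (0:ℝ) :=
      Ioo_mem_nhdsGT_of_mem ⟨le_refl _, one_pos⟩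
    have hg : Tendsto (fun m : ℝ =>
        π / 2 * (2 * Real.sqrt (1 - m) - 1 / Real.sqrt (1 - m))) (𝓝[>] (0:ℝ)) (𝓝 (π/2)) := by
      have hc : ContinuousAt (fun m : ℝ =>
          π / 2 * (2 * Real.sqrt (1 - m) - 1 / Real.sqrt (1 - m))) 0 := by
        have h1 : ContinuousAt (fun m : ℝ => Real.sqrt (1 - m)) 0 := by fun_prop
        have h2 : Real.sqrt (1 - (0:ℝ)) ≠ 0 := by simp
        exact continuousAt_const.mul ((continuousAt_const.mul h1).sub
          (continuousAt_const.div h1 h2))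
      have := hc.tendsto
      simp only [sub_zero, Real.sqrt_one] at this
      have h3 : π / 2 * (2 * 1 - 1 / 1) = π / 2 := by ring
      rw [h3] at this
      exact this.mono_left nhdsWithin_le_nhds
    refine tendsto_of_tendsto_of_tendsto_of_le_of_le' hg tendsto_const_nhds ?_ ?_
    · filter_upwards [hmem] with m hm
      rw [repr_elF hm.2]
      have hlow : ∀ θ ∈ Set.Icc (0:ℝ) (π/2),
          2 * Real.sqrt (1 - m) - 1 / Real.sqrt (1 - m) ≤ elF m θ := by
        intro θ _
        have h1 : 1 - m ≤ 1 - m * Real.sin θ ^ 2 := by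
          nlinarith [Real.sin_sq_le_one θ, hm.1]
        have h2 : Real.sqrt (1 - m) ≤ Real.sqrt (1 - m * Real.sin θ ^ 2) :=
          Real.sqrt_le_sqrt h1
        have h3 : 0 < Real.sqrt (1 - m) := Real.sqrt_pos.mpr (by linarith [hm.2])
        have h4 : 1 / Real.sqrt (1 - m * Real.sin θ ^ 2) ≤ 1 / Real.sqrt (1 - m) :=
          one_div_le_one_div_of_le h3 h2
        unfold elF; linarith
      calc π / 2 * (2 * Real.sqrt (1 - m) - 1 / Real.sqrt (1 - m))
          = ∫ _ in (0:ℝ)..(π/2), (2 * Real.sqrt (1 - m) - 1 / Real.sqrt (1 - m)) := by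
            rw [intervalIntegral.integral_const, smul_eq_mul, sub_zero]
        _ ≤ ∫ θ in (0:ℝ)..(π/2), elF m θ := by
            apply intervalIntegral.integral_mono_on hpi.le
              (intervalIntegrable_const) ((cont_elF hm.2).intervalIntegrable _ _) hlow
    · filter_upwards [hmem] with m hm
      rw [repr_elF hm.2]
      have hup : ∀ θ ∈ Set.Icc (0:ℝ) (π/2), elF m θ ≤ 1 := by
        intro θ _
        have harg : 0 < 1 - m * Real.sin θ ^ 2 := arg_pos hm.2 θ
        have h1 : 1 - m * Real.sin θ ^ 2 ≤ 1 := by nlinarith [sq_nonneg (Real.sin θ), hm.1]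
        have h2 : Real.sqrt (1 - m * Real.sin θ ^ 2) ≤ 1 :=
          Real.sqrt_le_one.mpr h1
        have h3 : 0 < Real.sqrt (1 - m * Real.sin θ ^ 2) := Real.sqrt_pos.mpr harg
        have h4 : 1 ≤ 1 / Real.sqrt (1 - m * Real.sin θ ^ 2) :=
          one_le_one_div h3 h2
        unfold elF; linarith
      calc (∫ θ in (0:ℝ)..(π/2), elF m θ) ≤ ∫ _ in (0:ℝ)..(π/2), (1:ℝ) := by
            apply intervalIntegral.integral_mono_on hpi.le
              ((cont_elF hm.2).intervalIntegrable _ _) intervalIntegrable_const hup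
        _ = π / 2 := by simp
  · -- limit at 1⁻
    have hmem : Set.Ioo (0:ℝ) 1 ∈ 𝓝[<] (1:ℝ) :=
      Ioo_mem_nhdsLT_of_mem ⟨one_pos, le_refl _⟩
    have hbound : ∀ m ∈ Set.Ioo (0:ℝ) 1,
        2 * ellE m - ellK m ≤ (π - Real.log (π/2)) + Real.log (Real.sqrt (1 - m)) := by
      intro m hm
      set c := Real.sqrt (1 - m) with hc
      have hcpos : 0 < c := Real.sqrt_pos.mpr (by linarith [hm.2])
      have hcsq : c ^ 2 = 1 - m := Real.sq_sqrt (by linarith [hm.2])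
      -- pointwise bound
      have hpt : ∀ θ ∈ Set.Icc (0:ℝ) (π/2), elF m θ ≤ 2 - (c + π/2 - θ)⁻¹ := by
        intro θ hθ
        have hu : 0 ≤ π/2 - θ := by linarith [hθ.2]
        have harg : 0 < 1 - m * Real.sin θ ^ 2 := arg_pos hm.2 θ
        have hcos : Real.cos θ ≤ π/2 - θ := by
          have := Real.sin_le hu
          rwa [Real.sin_pi_div_two_sub] at this
        have hcosnn : 0 ≤ Real.cos θ :=
          Real.cos_nonneg_of_mem_Icc ⟨by linarith [hθ.1, Real.pi_pos], hθ.2⟩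
        have hsc : Real.sin θ ^ 2 = 1 - Real.cos θ ^ 2 := by
          nlinarith [Real.sin_sq_add_cos_sq θ]
        have hle : 1 - m * Real.sin θ ^ 2 ≤ (c + (π/2 - θ)) ^ 2 := by
          have h1 : 1 - m * Real.sin θ ^ 2 = (1 - m) + m * Real.cos θ ^ 2 := by
            rw [hsc]; ring
          nlinarith [hm.2, sq_nonneg (Real.cos θ), mul_nonneg hcpos.le hu,
            sq_nonneg (π/2 - θ - Real.cos θ)]
        have hsle : Real.sqrt (1 - m * Real.sin θ ^ 2) ≤ c + π/2 - θ := by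
          have h := Real.sqrt_le_sqrt hle
          rw [Real.sqrt_sq (by linarith)] at h
          linarith
        have h3 : 0 < Real.sqrt (1 - m * Real.sin θ ^ 2) := Real.sqrt_pos.mpr harg
        have h4 : (c + π/2 - θ)⁻¹ ≤ 1 / Real.sqrt (1 - m * Real.sin θ ^ 2) := by
          rw [inv_eq_one_div]
          exact one_div_le_one_div_of_le h3 hsle
        have h5 : Real.sqrt (1 - m * Real.sin θ ^ 2) ≤ 1 :=
          Real.sqrt_le_one.mpr (by nlinarith [sq_nonneg (Real.sin θ), hm.1])
        unfold elF; linarith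
      -- the comparison integral
      have hne : ∀ θ ∈ Set.uIcc (0:ℝ) (π/2), c + π/2 - θ ≠ 0 := by
        intro θ hθ
        rw [Set.uIcc_of_le hpi.le] at hθ
        have := hθ.2
        have : 0 < c + π/2 - θ := by linarith
        linarith
      have hconton : ContinuousOn (fun θ : ℝ => (2:ℝ) - (c + π/2 - θ)⁻¹)
          (Set.uIcc (0:ℝ) (π/2)) := by
        apply ContinuousOn.sub continuousOn_const
        exact ContinuousOn.inv₀ (by fun_prop) hne
      have hInt : (∫ θ in (0:ℝ)..(π/2), ((2:ℝ) - (c + π/2 - θ)⁻¹)) =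
          π - (Real.log (c + π/2) - Real.log c) := by
        have hi1 : IntervalIntegrable (fun θ : ℝ => (c + π/2 - θ)⁻¹)
            MeasureTheory.volume 0 (π/2) := by
          apply ContinuousOn.intervalIntegrable
          exact ContinuousOn.inv₀ (by fun_prop) hne
        rw [intervalIntegral.integral_sub intervalIntegrable_const hi1]
        have h2 : (∫ θ in (0:ℝ)..(π/2), (c + π/2 - θ)⁻¹) =
            Real.log (c + π/2) - Real.log c := by
          have := intervalIntegral.integral_comp_sub_left (a := (0:ℝ)) (b := π/2)
            (fun u : ℝ => u⁻¹) (c + π/2)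
          rw [this]
          have he1 : c + π/2 - π/2 = c := by ring
          have he2 : c + π/2 - 0 = c + π/2 := by ring
          rw [he1, he2, integral_inv, Real.log_div (by positivity) hcpos.ne']
          rw [Set.uIcc_of_le (by linarith)]
          intro h
          exact absurd h.1 (by linarith)
        rw [h2]
        simp
      have hle2 : 2 * ellE m - ellK m ≤ π - (Real.log (c + π/2) - Real.log c) := by
        rw [repr_elF hm.2, ← hInt]
        apply intervalIntegral.integral_mono_on hpi.le
          ((cont_elF hm.2).intervalIntegrable _ _)
          (hconton.intervalIntegrable) hpt
      have hlog : Real.log (π/2) ≤ Real.log (c + π/2) :=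
        Real.log_le_log hpi (by linarith)
      linarith
    have hg : Tendsto (fun m : ℝ => (π - Real.log (π/2)) + Real.log (Real.sqrt (1 - m)))
        (𝓝[<] (1:ℝ)) atBot := by
      apply tendsto_atBot_add_const_left
      have h1 : Tendsto (fun m : ℝ => 1 - m) (𝓝[<] (1:ℝ)) (𝓝[>] (0:ℝ)) := by
        apply tendsto_nhdsWithin_of_tendsto_nhds_of_eventually_within
        · have : Tendsto (fun m : ℝ => 1 - m) (𝓝 (1:ℝ)) (𝓝 (1 - 1)) :=
            (continuous_const.sub continuous_id).tendsto 1
          simpa using this.mono_left nhdsWithin_le_nhds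
        · filter_upwards [self_mem_nhdsWithin] with m hm
          simp only [Set.mem_Iio] at hm
          simp only [Set.mem_Ioi]
          linarith
      have h2 : Tendsto Real.sqrt (𝓝[>] (0:ℝ)) (𝓝[>] (0:ℝ)) := by
        apply tendsto_nhdsWithin_of_tendsto_nhds_of_eventually_within
        · simpa using (Real.continuous_sqrt.tendsto 0).mono_left nhdsWithin_le_nhds
        · filter_upwards [self_mem_nhdsWithin] with x hx
          exact Real.sqrt_pos.mpr hx
      exact Real.tendsto_log_nhdsGT_zero.comp (h2.comp h1)
    apply tendsto_atBot_mono' _ _ hg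
    filter_upwards [hmem] with m hm
    exact hbound m hm
end

section
/- Fix t > 1 and set τ = t - 1/t. For 0 < β < τ, the improper integral J₃(τ,β) = ∫_β^τ (1/(sqrt(ζ²+4)·sqrt(τ²-ζ²)))·sqrt((ζ-β)/(ζ+β)) dζ satisfies: τ·J₃(τ,β) is finite, and as a function of τ (with β fixed), τ·J₃ ~ log τ as τ → ∞, i.e., (τ·J₃)/log τ → 1. -/
open Real Filter Topology MeasureTheory

/-- The period integral `J₃(τ,β)` (with `α = β`) of the Weierstrass data of the family `𝒪`. -/
noncomputable def J₃ (τ β : ℝ) : ℝ :=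
  ∫ ζ in β..τ, (1 / (Real.sqrt (ζ^2 + 4) * Real.sqrt (τ^2 - ζ^2))) * Real.sqrt ((ζ - β) / (ζ + β))

/-!
Since `√((ζ - β) / (ζ + β)) ≤ 1` and `√(ζ² + 4) ≥ ζ`, the integrand is at most
`1 / (ζ √(τ² - ζ²))`, whose integral over `[β, τ]` is `log ((τ + √(τ² - β²)) / β) / τ`; this
gives integrability at the endpoint `τ` and `τ J₃ ≤ log τ + log (2 / β)`.
Conversely `τ / √(τ² - ζ²) ≥ 1`, so `τ J₃ ≥ ∫ g` with `g ζ = √((ζ - β) / (ζ + β)) / √(ζ² + 4)`.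
As `ζ g ζ → 1`, for every `a < 1` we have `g ζ ≥ a / ζ` on some `[M, ∞)`, hence
`τ J₃ ≥ a (log τ - log M)`.
-/

open Set

noncomputable section

def j₃Integrand (τ β ζ : ℝ) : ℝ :=
  (1 / (√(ζ ^ 2 + 4) * √(τ ^ 2 - ζ ^ 2))) * √((ζ - β) / (ζ + β))

/-- The pointwise limit of `τ * j₃Integrand τ β` as `τ → ∞`. -/
def j₃Profile (β ζ : ℝ) : ℝ :=
  √((ζ - β) / (ζ + β)) / √(ζ ^ 2 + 4)

/-- `-arcosh (τ / ζ) / τ`, written with logarithms: an antiderivative of `(ζ * √(τ² - ζ²))⁻¹`. -/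
def arcoshAntideriv (τ ζ : ℝ) : ℝ :=
  (log ζ - log (τ + √(τ ^ 2 - ζ ^ 2))) / τ

lemma j₃Integrand_nonneg (τ β ζ : ℝ) : 0 ≤ j₃Integrand τ β ζ := by
  unfold j₃Integrand; positivity

lemma sqrt_div_add_le_one {β ζ : ℝ} (hβ : 0 < β) (hβζ : β ≤ ζ) :
    √((ζ - β) / (ζ + β)) ≤ 1 :=
  sqrt_le_one.2 ((div_le_one (by linarith)).2 (by linarith))

lemma j₃Integrand_le {τ β ζ : ℝ} (hβ : 0 < β) (hβζ : β ≤ ζ) :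
    j₃Integrand τ β ζ ≤ (ζ * √(τ ^ 2 - ζ ^ 2))⁻¹ := by
  have hζ : 0 < ζ := hβ.trans_le hβζ
  have hsq : ζ ≤ √(ζ ^ 2 + 4) := le_sqrt_of_sq_le (by linarith)
  calc j₃Integrand τ β ζ ≤ 1 / (√(ζ ^ 2 + 4) * √(τ ^ 2 - ζ ^ 2)) * 1 := by
        unfold j₃Integrand
        gcongr
        exact sqrt_div_add_le_one hβ hβζ
    _ = (√(ζ ^ 2 + 4))⁻¹ * (√(τ ^ 2 - ζ ^ 2))⁻¹ := by rw [mul_one, one_div, mul_inv]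
    _ ≤ ζ⁻¹ * (√(τ ^ 2 - ζ ^ 2))⁻¹ := by gcongr
    _ = (ζ * √(τ ^ 2 - ζ ^ 2))⁻¹ := (mul_inv _ _).symm

lemma j₃Profile_le_mul_j₃Integrand {τ β ζ : ℝ} (hζ : 0 ≤ ζ) (hζτ : ζ < τ) :
    j₃Profile β ζ ≤ τ * j₃Integrand τ β ζ := by
  have hs : 0 < √(τ ^ 2 - ζ ^ 2) := sqrt_pos.2 (by nlinarith)
  have hsτ : √(τ ^ 2 - ζ ^ 2) ≤ τ := sqrt_le_iff.2 ⟨by linarith, by nlinarith⟩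
  have hτs : 1 ≤ τ / √(τ ^ 2 - ζ ^ 2) := (one_le_div hs).2 hsτ
  calc j₃Profile β ζ ≤ τ / √(τ ^ 2 - ζ ^ 2) * j₃Profile β ζ :=
        le_mul_of_one_le_left (by unfold j₃Profile; positivity) hτs
    _ = τ * j₃Integrand τ β ζ := by unfold j₃Profile j₃Integrand; ring

lemma hasDerivAt_arcoshAntideriv {τ x : ℝ} (hx : 0 < x) (hxτ : x < τ) :
    HasDerivAt (arcoshAntideriv τ) (x * √(τ ^ 2 - x ^ 2))⁻¹ x := by
  have hin : 0 < τ ^ 2 - x ^ 2 := by nlinarith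
  have hτ : 0 < τ := hx.trans hxτ
  have hroot := (((hasDerivAt_pow 2 x).const_sub (τ ^ 2)).sqrt hin.ne').const_add τ
  have hs : 0 < √(τ ^ 2 - x ^ 2) := sqrt_pos.2 hin
  have hs2 : √(τ ^ 2 - x ^ 2) ^ 2 = τ ^ 2 - x ^ 2 := sq_sqrt hin.le
  refine (((hasDerivAt_log hx.ne').sub (hroot.log (by positivity))).div_const τ).congr_deriv ?_
  norm_num
  field_simp
  linear_combination hs2

lemma continuousOn_arcoshAntideriv {τ β : ℝ} (hβ : 0 < β) :
    ContinuousOn (arcoshAntideriv τ) (Icc β τ) := by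
  unfold arcoshAntideriv
  refine ContinuousOn.div_const (ContinuousOn.sub ?_ ?_) τ
  · exact continuousOn_log.mono fun ζ hζ => (hβ.trans_le hζ.1).ne'
  · refine ((continuous_const.add (by fun_prop)).continuousOn).log fun ζ hζ => ?_
    have := sqrt_nonneg (τ ^ 2 - ζ ^ 2)
    simp only [Pi.add_apply]
    linarith [hζ.1, hζ.2]

lemma intervalIntegrable_inv_mul_sqrt {τ β : ℝ} (hβ : 0 < β) (hβτ : β ≤ τ) :
    IntervalIntegrable (fun ζ => (ζ * √(τ ^ 2 - ζ ^ 2))⁻¹) volume β τ := by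
  refine intervalIntegral.intervalIntegrable_deriv_of_nonneg (g := arcoshAntideriv τ) ?_ ?_ ?_
  · rw [uIcc_of_le hβτ]; exact continuousOn_arcoshAntideriv hβ
  · rw [min_eq_left hβτ, max_eq_right hβτ]
    exact fun x hx => hasDerivAt_arcoshAntideriv (hβ.trans hx.1) hx.2
  · rw [min_eq_left hβτ, max_eq_right hβτ]
    exact fun x hx => inv_nonneg.2 (mul_nonneg (hβ.trans hx.1).le (sqrt_nonneg _))

lemma integral_inv_mul_sqrt {τ β : ℝ} (hβ : 0 < β) (hβτ : β ≤ τ) :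
    ∫ ζ in β..τ, (ζ * √(τ ^ 2 - ζ ^ 2))⁻¹ = (log (τ + √(τ ^ 2 - β ^ 2)) - log β) / τ := by
  rw [intervalIntegral.integral_eq_sub_of_hasDerivAt_of_le hβτ (continuousOn_arcoshAntideriv hβ)
    (fun x hx => hasDerivAt_arcoshAntideriv (hβ.trans hx.1) hx.2)
    (intervalIntegrable_inv_mul_sqrt hβ hβτ)]
  simp only [arcoshAntideriv, sub_self, sqrt_zero, add_zero]
  ring

lemma intervalIntegrable_j₃Integrand {τ β : ℝ} (hβ : 0 < β) (hβτ : β ≤ τ) :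
    IntervalIntegrable (j₃Integrand τ β) volume β τ := by
  refine (intervalIntegrable_inv_mul_sqrt hβ hβτ).mono_fun
    (by unfold j₃Integrand; fun_prop) ?_
  rw [uIoc_of_le hβτ]
  refine (ae_restrict_mem measurableSet_Ioc).mono fun ζ hζ => ?_
  have hζ₀ : 0 < ζ := hβ.trans hζ.1
  dsimp only
  rw [norm_of_nonneg (j₃Integrand_nonneg τ β ζ), norm_of_nonneg (by positivity)]
  exact j₃Integrand_le hβ hζ.1.le

lemma mul_J₃_le {τ β : ℝ} (hβ : 0 < β) (hβτ : β ≤ τ) :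
    τ * J₃ τ β ≤ log τ + (log 2 - log β) := by
  have hτ : 0 < τ := hβ.trans_le hβτ
  have hroot : τ + √(τ ^ 2 - β ^ 2) ≤ 2 * τ := by
    have : √(τ ^ 2 - β ^ 2) ≤ τ := sqrt_le_iff.2 ⟨hτ.le, by nlinarith⟩
    linarith
  calc τ * J₃ τ β ≤ τ * ∫ ζ in β..τ, (ζ * √(τ ^ 2 - ζ ^ 2))⁻¹ := by
        gcongr
        exact intervalIntegral.integral_mono_on hβτ (intervalIntegrable_j₃Integrand hβ hβτ)
          (intervalIntegrable_inv_mul_sqrt hβ hβτ) fun ζ hζ => j₃Integrand_le hβ hζ.1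
    _ = log (τ + √(τ ^ 2 - β ^ 2)) - log β := by
        rw [integral_inv_mul_sqrt hβ hβτ, mul_div_cancel₀ _ hτ.ne']
    _ ≤ log (2 * τ) - log β := by gcongr
    _ = log τ + (log 2 - log β) := by rw [log_mul two_ne_zero hτ.ne']; ring

lemma mul_log_sub_log_le_mul_J₃ {τ β M a : ℝ} (hβ : 0 < β) (hβM : β ≤ M) (hMτ : M ≤ τ)
    (ha : ∀ ζ ∈ Ioo M τ, a ≤ ζ * j₃Profile β ζ) :
    a * (log τ - log M) ≤ τ * J₃ τ β := by
  have hM : 0 < M := hβ.trans_le hβM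
  have hint := (intervalIntegrable_j₃Integrand hβ (hβM.trans hMτ)).const_mul τ
  calc a * (log τ - log M) = ∫ ζ in M..τ, a * ζ⁻¹ := by
        rw [intervalIntegral.integral_const_mul, integral_inv_of_pos hM (hM.trans_le hMτ),
          log_div (hM.trans_le hMτ).ne' hM.ne']
    _ ≤ ∫ ζ in M..τ, τ * j₃Integrand τ β ζ := by
        refine intervalIntegral.integral_mono_on_of_le_Ioo hMτ
          ((continuousOn_inv₀.mono fun ζ hζ => ?_).intervalIntegrable.const_mul a)
          (hint.mono_set (by rw [uIcc_of_le hMτ, uIcc_of_le (hβM.trans hMτ)]; gcongr))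
          fun ζ hζ => ?_
        · rw [uIcc_of_le hMτ] at hζ; exact (hM.trans_le hζ.1).ne'
        have hζ₀ : 0 < ζ := hM.trans hζ.1
        calc a * ζ⁻¹ ≤ ζ * j₃Profile β ζ * ζ⁻¹ := by gcongr; exact ha ζ hζ
          _ = j₃Profile β ζ := by field_simp
          _ ≤ τ * j₃Integrand τ β ζ := j₃Profile_le_mul_j₃Integrand hζ₀.le hζ.2
    _ ≤ ∫ ζ in β..τ, τ * j₃Integrand τ β ζ :=
        intervalIntegral.integral_mono_interval hβM hMτ le_rfl
          (ae_of_all _ fun ζ => mul_nonneg (hM.le.trans hMτ) (j₃Integrand_nonneg τ β ζ)) hint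
    _ = τ * J₃ τ β := intervalIntegral.integral_const_mul τ _

lemma tendsto_one_sub_div_atTop {f : ℝ → ℝ} (c : ℝ) (hf : Tendsto f atTop atTop) :
    Tendsto (fun x => 1 - c / f x) atTop (𝓝 1) := by
  simpa using tendsto_const_nhds.sub (tendsto_const_nhds.div_atTop hf)

lemma tendsto_mul_j₃Profile (β : ℝ) :
    Tendsto (fun ζ => ζ * j₃Profile β ζ) atTop (𝓝 1) := by
  have hlim : Tendsto (fun ζ => √(1 - 2 * β / (ζ + β)) * √(1 - 4 / (ζ ^ 2 + 4))) atTop (𝓝 1) := by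
    simpa using ((tendsto_one_sub_div_atTop (2 * β) (tendsto_atTop_add_const_right _ β
      tendsto_id)).sqrt).mul ((tendsto_one_sub_div_atTop 4 (tendsto_atTop_add_const_right _ 4
      (tendsto_pow_atTop two_ne_zero))).sqrt)
  refine hlim.congr' ?_
  filter_upwards [eventually_gt_atTop 0, eventually_gt_atTop (-β)] with ζ hζ hζβ
  have hζβ' : ζ + β ≠ 0 := by linarith
  rw [j₃Profile, show 1 - 2 * β / (ζ + β) = (ζ - β) / (ζ + β) by field_simp; ring,
    show 1 - 4 / (ζ ^ 2 + 4) = ζ ^ 2 / (ζ ^ 2 + 4) by field_simp; ring,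
    sqrt_div' _ (by positivity : (0:ℝ) ≤ ζ ^ 2 + 4), sqrt_sq hζ.le]
  ring

lemma tendsto_div_log_of_bounds {L : ℝ → ℝ} (C : ℝ) (hup : ∀ᶠ x in atTop, L x ≤ log x + C)
    (hlow : ∀ a < 1, ∃ D, ∀ᶠ x in atTop, a * (log x - D) ≤ L x) :
    Tendsto (fun x => L x / log x) atTop (𝓝 1) := by
  refine tendsto_order.2 ⟨fun b hb => ?_, fun b hb => ?_⟩
  · obtain ⟨a, hba, ha⟩ := exists_between hb
    obtain ⟨D, hD⟩ := hlow a ha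
    have hlim : Tendsto (fun x => a * (1 - D / log x)) atTop (𝓝 a) := by
      simpa using (tendsto_one_sub_div_atTop D tendsto_log_atTop).const_mul a
    filter_upwards [hlim.eventually (lt_mem_nhds hba), hD, tendsto_log_atTop.eventually_gt_atTop 0]
      with x hb hax hx
    calc b < a * (1 - D / log x) := hb
      _ = a * (log x - D) / log x := by field_simp
      _ ≤ L x / log x := by gcongr
  · have hlim : Tendsto (fun x => 1 - (-C) / log x) atTop (𝓝 1) :=
      tendsto_one_sub_div_atTop (-C) tendsto_log_atTop
    filter_upwards [hlim.eventually (gt_mem_nhds hb), hup, tendsto_log_atTop.eventually_gt_atTop 0]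
      with x hb hLx hx
    calc L x / log x ≤ (log x + C) / log x := by gcongr
      _ = 1 - (-C) / log x := by field_simp; ring
      _ < b := hb

lemma exists_mul_log_sub_le_mul_J₃ {β : ℝ} (hβ : 0 < β) {a : ℝ} (ha : a < 1) :
    ∃ D, ∀ᶠ τ in atTop, a * (log τ - D) ≤ τ * J₃ τ β := by
  obtain ⟨M₀, hM₀⟩ := eventually_atTop.1 ((tendsto_mul_j₃Profile β).eventually (lt_mem_nhds ha))
  refine ⟨log (max M₀ β), (eventually_ge_atTop (max M₀ β)).mono fun τ hτ => ?_⟩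
  exact mul_log_sub_log_le_mul_J₃ hβ (le_max_right _ _) hτ fun ζ hζ =>
    (hM₀ ζ ((le_max_left _ _).trans hζ.1.le)).le

end

theorem stmt_19_general (τ β : ℝ) (hβ : 0 < β) (hβτ : β < τ) :
    IntervalIntegrable
      (fun ζ => (1 / (Real.sqrt (ζ^2 + 4) * Real.sqrt (τ^2 - ζ^2))) * Real.sqrt ((ζ - β) / (ζ + β)))
      volume β τ ∧
    Tendsto (fun τ' : ℝ => τ' * J₃ τ' β / Real.log τ') atTop (nhds 1) :=
  ⟨intervalIntegrable_j₃Integrand hβ hβτ.le,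
    tendsto_div_log_of_bounds _ ((eventually_ge_atTop β).mono fun _ hτ' => mul_J₃_le hβ hτ')
      fun _ ha => exists_mul_log_sub_le_mul_J₃ hβ ha⟩

theorem stmt_19 (t : ℝ) (ht : 1 < t) (τ β : ℝ) (hτ : τ = t - 1/t) (hβ : 0 < β) (hβτ : β < τ) :
    IntervalIntegrable
      (fun ζ => (1 / (Real.sqrt (ζ^2 + 4) * Real.sqrt (τ^2 - ζ^2))) * Real.sqrt ((ζ - β) / (ζ + β)))
      volume β τ ∧
    Tendsto (fun τ' : ℝ => τ' * J₃ τ' β / Real.log τ') atTop (nhds 1) :=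
  stmt_19_general τ β hβ hβτ
end
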